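/- Let h>0, a∈ℝ, ν∈(0,1], let y:(hℕ)_a→ℝ, and let m be a positive integer. Then (_aΔ_h^ν y^{2^m})(t) ≤ 2^m·y(t+νh)^{2^m−1}·(_aΔ_h^ν y)(t) for all t∈(hℕ)_{a+(1−ν)h}, where y^{2^m} denotes the function t↦y(t)^{2^m}. -/
import Mathlib


open Finset Filter Matrix

/-- The `h`-factorial function `t_h^(ν) = h^ν Γ(t/h+1)/Γ(t/h+1-ν)`. -/
noncomputable def hfact (h t ν : ℝ) : ℝ :=
  h ^ ν * Real.Gamma (t / h + 1) / Real.Gamma (t / h + 1 - ν)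

/-- The forward `h`-difference operator. -/
noncomputable def fdiff (h : ℝ) (y : ℝ → ℝ) (t : ℝ) : ℝ := (y (t + h) - y t) / h

/-- The fractional `h`-sum of order `μ > 0` of `y : (hℕ)_a → ℝ`, evaluated at the
grid point `t = a + μh + k·h` of `(hℕ)_{a+μh}`. -/
noncomputable def hSum (h a μ : ℝ) (y : ℝ → ℝ) (k : ℕ) : ℝ :=
  (h / Real.Gamma μ) *
    ∑ j ∈ Finset.range (k + 1),
      hfact h (a + μ * h + (k : ℝ) * h - (a + (j : ℝ) * h + h)) (μ - 1) * y (a + (j : ℝ) * h)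

/-- The Riemann–Liouville-like `h`-difference of order `ν ∈ (0,1]` of `y : (hℕ)_a → ℝ`,
evaluated at the grid point `t = a + (1-ν)h + k·h` of `(hℕ)_{a+(1-ν)h}`:
for `ν ∈ (0,1)` it is `Δ_h` applied to the `(1-ν)`-fractional `h`-sum. -/
noncomputable def rlD (h a ν : ℝ) (y : ℝ → ℝ) (k : ℕ) : ℝ :=
  if ν = 1 then fdiff h y (a + (k : ℝ) * h)
  else (hSum h a (1 - ν) y (k + 1) - hSum h a (1 - ν) y k) / h

lemma key_pow (m : ℕ) (hm : 1 ≤ m) (x Y : ℝ) :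
    Y ^ (2^m) + ((2^m : ℕ) : ℝ) * Y ^ (2^m - 1) * (x - Y) ≤ x ^ (2^m) := by
  induction m, hm using Nat.le_induction with
  | base => norm_num; nlinarith [sq_nonneg (x - Y)]
  | succ m hm ih =>
    set n := 2^m with hn
    have hn1 : 1 ≤ n := Nat.one_le_two_pow
    have hYn : 0 ≤ Y ^ n := by
      have : Even n := by
        rw [hn]; exact (Nat.even_pow).mpr ⟨even_two, by omega⟩
      exact this.pow_nonneg Y
    have e1 : 2^(m+1) = n * 2 := by rw [hn, pow_succ]
    have e2 : n * 2 - 1 = (n - 1) + n := by omega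
    rw [e1, e2, pow_mul, pow_mul, pow_add]
    have h2 := mul_le_mul_of_nonneg_right ih hYn
    push_cast
    nlinarith [sq_nonneg (x^n - Y^n)]

noncomputable def Bf (μ : ℝ) (i : ℕ) : ℝ := Real.Gamma (μ + i) / Real.Gamma ((i : ℝ) + 1)

lemma Bf_nonneg (μ : ℝ) (hμ : 0 < μ) (i : ℕ) : 0 ≤ Bf μ i := by
  have h1 : 0 < Real.Gamma (μ + i) := Real.Gamma_pos_of_pos (by positivity)
  have h2 : 0 < Real.Gamma ((i:ℝ) + 1) := Real.Gamma_pos_of_pos (by positivity)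
  exact le_of_lt (div_pos h1 h2)

lemma Bf_succ_le (μ : ℝ) (hμ : 0 < μ) (hμ1 : μ ≤ 1) (i : ℕ) : Bf μ (i+1) ≤ Bf μ i := by
  have h1 : 0 < Real.Gamma (μ + i) := Real.Gamma_pos_of_pos (by positivity)
  have h2 : 0 < Real.Gamma ((i:ℝ) + 1) := Real.Gamma_pos_of_pos (by positivity)
  unfold Bf
  push_cast
  rw [show μ + ((i:ℝ)+1) = (μ + i) + 1 by ring, Real.Gamma_add_one (by positivity),
    show (i:ℝ)+1+1 = ((i:ℝ)+1)+1 from rfl, Real.Gamma_add_one (by positivity),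
    div_le_div_iff₀ (by positivity) h2]
  nlinarith [mul_pos h1 h2]

lemma Bf_zero (μ : ℝ) : Bf μ 0 = Real.Gamma μ := by
  simp [Bf, Real.Gamma_one]

lemma hfact_eq (h μ : ℝ) (hh : 0 < h) (c : ℝ) :
    hfact h ((μ + c - 1) * h) (μ - 1) = h ^ (μ - 1) * (Real.Gamma (μ + c) / Real.Gamma (c + 1)) := by
  unfold hfact
  rw [mul_div_cancel_right₀ _ (ne_of_gt hh)]
  rw [show μ + c - 1 + 1 = μ + c by ring, show μ + c - (μ-1) = c + 1 by ring,
    mul_div_assoc]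

lemma hSum_eq (h a μ : ℝ) (hh : 0 < h) (y : ℝ → ℝ) (k : ℕ) :
    hSum h a μ y k = (h * h ^ (μ - 1) / Real.Gamma μ) *
      ∑ j ∈ Finset.range (k + 1), Bf μ (k - j) * y (a + (j : ℝ) * h) := by
  unfold hSum
  rw [Finset.mul_sum, Finset.mul_sum]
  refine Finset.sum_congr rfl (fun j hj => ?_)
  have hj' : j ≤ k := Nat.lt_succ_iff.mp (Finset.mem_range.mp hj)
  have e : a + μ*h + (k:ℝ)*h - (a + (j:ℝ)*h + h) = (μ + ((k-j:ℕ):ℝ) - 1) * h := by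
    push_cast [hj']; ring
  rw [e, hfact_eq h μ hh]
  unfold Bf
  ring

lemma rlD_eq (h a ν : ℝ) (hh : 0 < h) (hμ : 0 < 1 - ν) (y : ℝ → ℝ) (k : ℕ) :
    rlD h a ν y k = h ^ (1 - ν - 1) / Real.Gamma (1-ν) *
      (Real.Gamma (1-ν) * y (a + ((k:ℝ)+1)*h)
        + ∑ j ∈ Finset.range (k+1), (Bf (1-ν) (k+1-j) - Bf (1-ν) (k-j)) * y (a + (j:ℝ)*h)) := by
  have hν : ν ≠ 1 := by intro hc; rw [hc] at hμ; norm_num at hμ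
  have hΓ : Real.Gamma (1-ν) ≠ 0 := ne_of_gt (Real.Gamma_pos_of_pos hμ)
  unfold rlD
  rw [if_neg hν, hSum_eq h a _ hh, hSum_eq h a _ hh]
  rw [Finset.sum_range_succ]
  simp only [Nat.sub_self, Bf_zero]
  have esub : ∑ j ∈ Finset.range (k+1), (Bf (1-ν) (k+1-j) - Bf (1-ν) (k-j)) * y (a + (j:ℝ)*h)
      = (∑ j ∈ Finset.range (k+1), Bf (1-ν) (k+1-j) * y (a + (j:ℝ)*h))
        - ∑ j ∈ Finset.range (k+1), Bf (1-ν) (k-j) * y (a + (j:ℝ)*h) := by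
    rw [← Finset.sum_sub_distrib]; exact Finset.sum_congr rfl fun j _ => by ring
  rw [esub]
  have e1 : ((k+1:ℕ):ℝ) = (k:ℝ)+1 := by push_cast; ring
  rw [e1]
  field_simp
  ring

lemma tele (μ : ℝ) (k : ℕ) :
    ∑ j ∈ Finset.range (k+1), (Bf μ (k+1-j) - Bf μ (k-j)) = Bf μ (k+1) - Bf μ 0 := by
  rw [← Finset.sum_range_reflect]
  rw [Finset.sum_congr rfl (fun j hj => ?_), Finset.sum_range_sub (fun i => Bf μ i)]
  have hj : j ≤ k := Nat.lt_succ_iff.mp (Finset.mem_range.mp hj)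
  have e1 : k + 1 - (k + 1 - 1 - j) = j + 1 := by omega
  have e2 : k - (k + 1 - 1 - j) = j := by omega
  rw [e1, e2]

theorem stmt17 (h a ν : ℝ) (hh : 0 < h) (hν0 : 0 < ν) (hν1 : ν ≤ 1)
    (y : ℝ → ℝ) (m : ℕ) (hm : 1 ≤ m) :
    ∀ k : ℕ, rlD h a ν (fun t => y t ^ (2 ^ m)) k
      ≤ (2 : ℝ) ^ m * y (a + ((k : ℝ) + 1) * h) ^ (2 ^ m - 1) * rlD h a ν y k := by

  intro k
  set n := 2^m with hn
  have hn1 : 1 ≤ n := Nat.one_le_two_pow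
  set N : ℝ := ((n : ℕ) : ℝ) with hN
  have hNval : (2:ℝ)^m = N := by rw [hN, hn]; push_cast; ring
  have hN2 : 2 ≤ N := by
    rw [hN, hn]
    have : 2 ≤ 2^m := by calc 2 = 2^1 := by norm_num
                              _ ≤ 2^m := Nat.pow_le_pow_right (by norm_num) hm
    exact_mod_cast this
  set Y := y (a + ((k:ℝ)+1)*h) with hY
  have hYn : 0 ≤ Y ^ n := by
    have : Even n := by rw [hn]; exact (Nat.even_pow).mpr ⟨even_two, by omega⟩
    exact this.pow_nonneg Y
  have hYY : Y^(n-1) * Y = Y^n := by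
    rw [← pow_succ]; congr 1; omega
  have hNYY : N * (Y^(n-1) * Y) = N * Y^n := by rw [hYY]
  by_cases hν : ν = 1
  · subst hν
    simp only [rlD, fdiff, ite_true, eq_self_iff_true, if_true]
    have key := key_pow m hm (y (a + (k:ℝ)*h)) Y
    rw [show a + (k:ℝ)*h + h = a + ((k:ℝ)+1)*h by ring]
    rw [hNval, mul_assoc,
      show N * (Y^(n-1) * ((y (a+((k:ℝ)+1)*h) - y (a+(k:ℝ)*h)) / h))
        = (N * (Y^(n-1) * (y (a+((k:ℝ)+1)*h) - y (a+(k:ℝ)*h)))) / h by ring]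
    rw [← hn] at key
    gcongr
    linarith [key]
  · have hν' : ν < 1 := lt_of_le_of_ne hν1 hν
    have hμ : 0 < 1 - ν := by linarith
    have hμ1 : 1 - ν ≤ 1 := by linarith
    set μ := 1 - ν with hμdef
    have hΓ : 0 < Real.Gamma μ := Real.Gamma_pos_of_pos hμ
    rw [rlD_eq h a ν hh hμ (fun t => y t ^ n) k, rlD_eq h a ν hh hμ y k]
    simp only [← hμdef]
    have hA : 0 ≤ h ^ (μ - 1) / Real.Gamma μ := by
      have : (0:ℝ) < h ^ (μ - 1) := Real.rpow_pos_of_pos hh _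
      positivity
    rw [show (1:ℝ) - ν - 1 = μ - 1 by rw [hμdef]]
    rw [mul_left_comm]
    refine mul_le_mul_of_nonneg_left ?_ hA
    -- core inequality
    set S := ∑ j ∈ Finset.range (k+1), (Bf μ (k+1-j) - Bf μ (k-j)) * y (a + (j:ℝ)*h) with hS
    set T := Bf μ (k+1) with hT
    have hT0 : 0 ≤ T := Bf_nonneg μ hμ _
    have hd : ∀ j ∈ Finset.range (k+1), Bf μ (k+1-j) - Bf μ (k-j) ≤ 0 := by
      intro j hj
      have hj' : j ≤ k := Nat.lt_succ_iff.mp (Finset.mem_range.mp hj)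
      have e : k+1-j = (k-j)+1 := by omega
      rw [e]
      have := Bf_succ_le μ hμ hμ1 (k-j)
      linarith
    have bound : ∀ j : ℕ, N*Y^(n-1)*(y (a+(j:ℝ)*h)) + (1-N)*Y^n ≤ (y (a+(j:ℝ)*h))^n := by
      intro j
      have key := key_pow m hm (y (a+(j:ℝ)*h)) Y
      rw [← hn] at key
      linarith [key, hNYY]
    have hkey : ∑ j ∈ Finset.range (k+1), (Bf μ (k+1-j) - Bf μ (k-j)) * (y (a+(j:ℝ)*h))^n
        ≤ N*Y^(n-1)*S + (1-N)*Y^n*(T - Bf μ 0) := by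
      calc ∑ j ∈ Finset.range (k+1), (Bf μ (k+1-j) - Bf μ (k-j)) * (y (a+(j:ℝ)*h))^n
          ≤ ∑ j ∈ Finset.range (k+1), (Bf μ (k+1-j) - Bf μ (k-j)) *
              (N*Y^(n-1)*(y (a+(j:ℝ)*h)) + (1-N)*Y^n) :=
            Finset.sum_le_sum (fun j hj => mul_le_mul_of_nonpos_left (bound j) (hd j hj))
        _ = N*Y^(n-1)*S + (1-N)*Y^n*(T - Bf μ 0) := by
            rw [hS, ← tele μ k, Finset.mul_sum, Finset.mul_sum, ← Finset.sum_add_distrib]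
            exact Finset.sum_congr rfl fun j _ => by ring
    rw [Bf_zero] at hkey
    calc Real.Gamma μ * Y^n + ∑ j ∈ Finset.range (k+1),
            (Bf μ (k+1-j) - Bf μ (k-j)) * (y (a+(j:ℝ)*h))^n
        ≤ Real.Gamma μ * Y^n + (N*Y^(n-1)*S + (1-N)*Y^n*(T - Real.Gamma μ)) := by
          linarith [hkey]
      _ = N*Y^(n-1)*(Real.Gamma μ * Y + S) + (1-N)*Y^n*T := by
          linear_combination (-(N*Real.Gamma μ)) * hYY
      _ ≤ N*Y^(n-1)*(Real.Gamma μ * Y + S) := by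
          have h1 : 0 ≤ (N-1)*(Y^n*T) := mul_nonneg (by linarith) (mul_nonneg hYn hT0)
          linarith
      _ = (2:ℝ)^m * Y^(n-1) * (Real.Gamma μ * y (a + ((k:ℝ)+1)*h) + S) := by rw [hNval, ← hY]
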